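/- Let $\Gamma$ be a $(Y,Y')$-distance-biregular graph with $k' \ge 3$ and $D = 3$, and suppose $\Gamma$ is $2$-$Y$-homogeneous. Then $b_1 = c_2$, i.e., $|\Gamma_2(x)| = \deg(x)$ for every $x \in Y$. -/

import Mathlib

open SimpleGraph Set

/-- A `(Y,Y')`-distance-biregular graph: a finite connected bipartite graph in which
every vertex is distance-regularized, and vertices in the same color class share the
same intersection numbers (`c`, `b` for class `Y` and `c'`, `b'` for class `Y'`),
while the two color classes have different intersection arrays.
`D` (resp. `D'`) is the common eccentricity of vertices in `Y` (resp. `Y'`). -/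
structure DBRG (V : Type) [Fintype V] where
  G : SimpleGraph V
  conn : G.Connected
  Y : Finset V
  Y' : Finset V
  Yne : Y.Nonempty
  Y'ne : Y'.Nonempty
  cover : ∀ v, v ∈ Y ∨ v ∈ Y'
  disj : ∀ v, ¬(v ∈ Y ∧ v ∈ Y')
  bip : ∀ u v, G.Adj u v → (u ∈ Y ↔ v ∈ Y')
  D : ℕ
  D' : ℕ
  eccY : ∀ x ∈ Y, (∃ y, G.dist x y = D) ∧ ∀ y, G.dist x y ≤ D
  eccY' : ∀ x ∈ Y', (∃ y, G.dist x y = D') ∧ ∀ y, G.dist x y ≤ D'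
  c : ℕ → ℕ
  b : ℕ → ℕ
  c' : ℕ → ℕ
  b' : ℕ → ℕ
  hc : ∀ i, 1 ≤ i → ∀ x ∈ Y, ∀ z, G.dist x z = i →
    {w | G.Adj z w ∧ G.dist x w = i - 1}.ncard = c i
  hb : ∀ i, ∀ x ∈ Y, ∀ z, G.dist x z = i →
    {w | G.Adj z w ∧ G.dist x w = i + 1}.ncard = b i
  hc' : ∀ i, 1 ≤ i → ∀ x ∈ Y', ∀ z, G.dist x z = i →
    {w | G.Adj z w ∧ G.dist x w = i - 1}.ncard = c' i
  hb' : ∀ i, ∀ x ∈ Y', ∀ z, G.dist x z = i →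
    {w | G.Adj z w ∧ G.dist x w = i + 1}.ncard = b' i
  c0 : c 0 = 0
  c'0 : c' 0 = 0
  nonreg : ¬ (∀ i, c i = c' i ∧ b i = b' i)

/-- `Γ` is `2`-`Y`-homogeneous with parameters `γ i`: for all `1 ≤ i ≤ D - 1` and all
`x ∈ Y`, `y ∈ Γ₂(x)`, `z ∈ Γ_{i,i}(x,y)`, the number of common neighbours of `x` and `y`
at distance `i - 1` from `z` equals `γ i` (independently of `x`, `y`, `z`). -/
def DBRG.TwoYHom {V : Type} [Fintype V] (Γ : DBRG V) (γ : ℕ → ℕ) : Prop :=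
  ∀ i, 1 ≤ i → i ≤ Γ.D - 1 → ∀ x ∈ Γ.Y, ∀ y, Γ.G.dist x y = 2 →
    ∀ z, Γ.G.dist x z = i → Γ.G.dist y z = i →
      {w | Γ.G.dist z w = i - 1 ∧ Γ.G.Adj x w ∧ Γ.G.Adj y w}.ncard = γ i

/-! Fix `x ∈ Y`. As `Γ` is bipartite and `D = 3`, every other vertex of `Y` lies in `Γ₂(x)`, so
for `y ∈ Γ₂(x)` all of `Y \ {x, y}` lies in `Γ₂(x) ∩ Γ₂(y)`. For `S ⊆ Γ(x)` count
`n(z) = |S ∩ Γ(z)|` over all vertices `z`: double counting gives `∑ n(z) = |S| k'` and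
`∑ n(z)² = |S| (k' + (|S| - 1) c'₂)`, since distinct members of `S` are at distance 2.
For `S = Γ(x)` the values of `n` are `b₀` at `x` and `c₂` on `Γ₂(x)`; for `S = Γ(x) ∩ Γ(y)`
they are `c₂` at `x` and `y`, and, by 2-`Y`-homogeneity, `γ₂` on the rest of `Y`. The four
resulting identities, with `k' = b₁ + 1`, force `(b₁ - c₂) b₁ (b₀ - c₂)² = 0`, while a geodesic
of length 3 shows `b₁ > 0` and `c₂ < b₀`. -/

open Finset

namespace SimpleGraph

variable {V : Type*} [Fintype V] (G : SimpleGraph V) [DecidableRel G.Adj]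

theorem ncard_neighborSet (v : V) : (G.neighborSet v).ncard = G.degree v := by
  rw [← Nat.card_coe_set_eq, Nat.card_eq_fintype_card, card_neighborSet_eq_degree]

variable [DecidableEq V]

theorem card_inter_neighborFinset (S : Finset V) (z : V) :
    #(S ∩ G.neighborFinset z) = ∑ u ∈ S, if G.Adj u z then 1 else 0 := by
  rw [← filter_mem_eq_inter, card_filter]
  simp only [mem_neighborFinset, adj_comm]

theorem sum_card_inter_neighborFinset (S : Finset V) :
    ∑ z, #(S ∩ G.neighborFinset z) = ∑ u ∈ S, G.degree u := by
  simp only [card_inter_neighborFinset, ← card_neighborFinset_eq_degree]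
  rw [sum_comm]
  refine sum_congr rfl fun u _ => ?_
  rw [← card_filter, neighborFinset_eq_filter]

theorem sum_card_inter_neighborFinset_sq (S : Finset V) :
    ∑ z, #(S ∩ G.neighborFinset z) ^ 2 =
      ∑ u ∈ S, ∑ v ∈ S, #(G.neighborFinset u ∩ G.neighborFinset v) := by
  simp only [sq, card_inter_neighborFinset, sum_mul_sum]
  rw [sum_comm]
  refine sum_congr rfl fun u _ => ?_
  rw [sum_comm]
  refine sum_congr rfl fun v _ => ?_
  rw [G.neighborFinset_eq_filter (v := u), sum_filter]
  refine sum_congr rfl fun w _ => ?_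
  simp only [ite_zero_mul_ite_zero, mul_one, G.adj_comm w v, ite_and]

theorem sum_sum_card_inter_neighborFinset_of_regular (S : Finset V) {k l : ℕ}
    (hk : ∀ u ∈ S, G.degree u = k)
    (hl : ∀ u ∈ S, ∀ v ∈ S, u ≠ v → #(G.neighborFinset u ∩ G.neighborFinset v) = l) :
    ∑ u ∈ S, ∑ v ∈ S, #(G.neighborFinset u ∩ G.neighborFinset v) = #S * (k + (#S - 1) * l) := by
  refine sum_const_nat fun u hu => ?_
  rw [← add_sum_erase S _ hu, Finset.inter_self, card_neighborFinset_eq_degree, hk u hu,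
    sum_const_nat fun v hv => hl u hu v (mem_of_mem_erase hv) (ne_of_mem_erase hv).symm,
    card_erase_of_mem hu]

end SimpleGraph

theorem eq_of_moment_identities {b₀ b₁ c₂ e p q g : ℤ}
    (hN₁ : b₀ + p * c₂ = b₀ * (b₁ + 1))
    (hN₂ : b₀ ^ 2 + p * c₂ ^ 2 = b₀ * (b₁ + 1 + (b₀ - 1) * e))
    (hC₁ : c₂ + c₂ + q * g = c₂ * (b₁ + 1))
    (hC₂ : c₂ ^ 2 + c₂ ^ 2 + q * g ^ 2 = c₂ * (b₁ + 1 + (c₂ - 1) * e))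
    (hp : q + 1 = p) (hb₁ : 0 < b₁) (hc₂ : 0 ≤ c₂) (hb₀ : c₂ < b₀) : b₁ = c₂ := by
  have he : (b₀ - 1) * (e - 1) = b₁ * (c₂ - 1) := by
    refine mul_left_cancel₀ (show b₀ ≠ 0 by omega) ?_
    linear_combination c₂ * hN₁ - hN₂
  have hg : q * g = c₂ * (b₁ - 1) := by linear_combination hC₁
  have hg₂ : q * (g * (g - 1)) = c₂ * (c₂ - 1) * (e - 2) := by linear_combination hC₂ - hC₁
  have hq : q * c₂ = b₀ * b₁ - c₂ := by linear_combination hN₁ + c₂ * hp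
  have key : (b₁ - c₂) * (b₁ * (b₀ - c₂) ^ 2) = 0 := by
    linear_combination (1 - b₀) * q * hg₂ + (b₀ - 1) * (c₂ * (b₁ - 1) + q * g - q) * hg
      - q * c₂ * (c₂ - 1) * he
      - (c₂ - 2 * b₁ * c₂ + b₁ * c₂ ^ 2 - b₀ * c₂ + b₀ * b₁) * hq
  have hpos : 0 < b₁ * (b₀ - c₂) ^ 2 := by positivity
  linarith [(mul_eq_zero.mp key).resolve_right hpos.ne']

namespace DBRG

variable {V : Type} [Fintype V] (Γ : DBRG V) {x y z u v w : V}

lemma mem_Y'_iff (v : V) : v ∈ Γ.Y' ↔ v ∉ Γ.Y := by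
  have := Γ.cover v
  have := Γ.disj v
  tauto

lemma mem_Y_iff_of_adj (h : Γ.G.Adj u v) : u ∈ Γ.Y ↔ v ∉ Γ.Y := by
  rw [← mem_Y'_iff]
  exact Γ.bip u v h

lemma even_dist_iff (u v : V) : Even (Γ.G.dist u v) ↔ (u ∈ Γ.Y ↔ v ∈ Γ.Y) := by
  classical
  let c : Γ.G.Coloring Bool :=
    Coloring.mk (fun v => decide (v ∈ Γ.Y)) fun h => by simp [Γ.mem_Y_iff_of_adj h]
  obtain ⟨p, hp⟩ := Γ.conn.exists_walk_length_eq_dist u v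
  rw [← hp, c.even_length_iff_congr p]
  change (decide (u ∈ Γ.Y) = true ↔ decide (v ∈ Γ.Y) = true) ↔ _
  simp only [decide_eq_true_eq]

lemma dist_eq_two_of_adj_of_adj (huw : Γ.G.Adj u w) (hwv : Γ.G.Adj w v)
    (hne : u ≠ v) : Γ.G.dist u v = 2 := by
  have hnadj : ¬ Γ.G.Adj u v := fun huv => by
    have := Γ.mem_Y_iff_of_adj huw
    have := Γ.mem_Y_iff_of_adj hwv
    have := Γ.mem_Y_iff_of_adj huv
    tauto
  have := Γ.conn.one_lt_dist_of_ne_of_not_adj hne hnadj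
  have := Γ.conn.dist_triangle (u := u) (v := w) (w := v)
  rw [dist_eq_one_iff_adj.mpr huw, dist_eq_one_iff_adj.mpr hwv] at this
  omega

lemma dist_eq_two_of_mem_Y (hD : Γ.D = 3) (hx : x ∈ Γ.Y) (hz : z ∈ Γ.Y)
    (hne : x ≠ z) : Γ.G.dist x z = 2 := by
  have hle := (Γ.eccY x hx).2 z
  have hpos := Γ.conn.pos_dist_of_ne hne
  obtain ⟨k, hk⟩ := (Γ.even_dist_iff x z).mpr (by tauto)
  omega

lemma ne_of_dist_eq_two (hxy : Γ.G.dist x y = 2) : y ≠ x := by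
  rintro rfl
  simp at hxy

lemma mem_Y_of_dist_eq_two (hx : x ∈ Γ.Y) (hxy : Γ.G.dist x y = 2) : y ∈ Γ.Y :=
  ((Γ.even_dist_iff x y).mp (by simp [hxy])).mp hx

lemma exists_adj_dist_eq {i : ℕ} (h : Γ.G.dist x z = i + 1) :
    ∃ w, Γ.G.Adj w z ∧ Γ.G.dist x w = i := by
  obtain ⟨p, hp⟩ := Γ.conn.exists_walk_length_eq_dist x z
  have hadj : Γ.G.Adj (p.getVert i) z := by
    simpa [p.getVert_of_length_le (show p.length ≤ i + 1 by omega)] using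
      p.adj_getVert_succ (i := i) (by omega)
  refine ⟨p.getVert i, hadj, le_antisymm ?_ ?_⟩
  · simpa using (dist_le (p.take i)).trans (by simp)
  · have := Γ.conn.dist_triangle (u := x) (v := p.getVert i) (w := z)
    rw [dist_eq_one_iff_adj.mpr hadj] at this
    omega

lemma exists_dist_eq_three (hD : Γ.D = 3) : ∃ x ∈ Γ.Y, ∃ u z w,
    Γ.G.dist x u = 1 ∧ Γ.G.dist x z = 2 ∧ Γ.G.dist x w = 3 ∧ Γ.G.Adj u z ∧ Γ.G.Adj z w := by
  obtain ⟨x, hx⟩ := Γ.Yne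
  obtain ⟨w, hw⟩ := (Γ.eccY x hx).1
  obtain ⟨z, hzw, hz⟩ := Γ.exists_adj_dist_eq (x := x) (z := w) (i := 2) (by omega)
  obtain ⟨u, huz, hu⟩ := Γ.exists_adj_dist_eq (i := 1) hz
  exact ⟨x, hx, u, z, w, hu, hz, by omega, huz, hzw⟩

lemma b'_zero_eq (hx : x ∈ Γ.Y) (hxu : Γ.G.Adj x u) : Γ.b' 0 = Γ.b 1 + 1 := by
  have hnbr : {w | Γ.G.Adj u w} = insert x {w | Γ.G.Adj u w ∧ Γ.G.dist x w = 1 + 1} := by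
    ext w
    by_cases hw : w = x
    · simp [hw, hxu.symm]
    · simpa [hw] using fun huw => Γ.dist_eq_two_of_adj_of_adj hxu huw (Ne.symm hw)
  have hdeg := Γ.hb' 0 u (Γ.bip x u hxu |>.mp hx) u dist_self
  rw [← Γ.hb 1 x hx u (dist_eq_one_iff_adj.mpr hxu),
    ← Set.ncard_insert_of_notMem (a := x) (by simp), ← hnbr, ← hdeg]
  congr 1
  ext w
  simp

lemma b_one_pos (hx : x ∈ Γ.Y) (hxu : Γ.G.dist x u = 1) (huz : Γ.G.Adj u z)
    (hxz : Γ.G.dist x z = 2) : 0 < Γ.b 1 := by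
  rw [← Γ.hb 1 x hx u hxu]
  exact (Set.ncard_pos (Set.toFinite _)).mpr ⟨z, huz, hxz⟩

lemma c_two_pos (hx : x ∈ Γ.Y) (hxz : Γ.G.dist x z = 2) : 0 < Γ.c 2 := by
  obtain ⟨u, huz, hu⟩ := Γ.exists_adj_dist_eq (i := 1) hxz
  rw [← Γ.hc 2 (by norm_num) x hx z hxz]
  exact (Set.ncard_pos (Set.toFinite _)).mpr ⟨u, huz.symm, hu⟩

lemma c_two_lt_b_zero (hx : x ∈ Γ.Y) (hxz : Γ.G.dist x z = 2) (hzw : Γ.G.Adj z w)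
    (hxw : Γ.G.dist x w = 3) : Γ.c 2 < Γ.b 0 := by
  rw [← Γ.hc 2 (by norm_num) x hx z hxz, ← Γ.hb 0 z (Γ.mem_Y_of_dist_eq_two hx hxz) z dist_self]
  refine Set.ncard_lt_ncard ⟨fun v hv => ⟨hv.1, ?_⟩, fun h => ?_⟩ (Set.toFinite _)
  · simpa using hv.1
  · have := (h ⟨hzw, by simpa using hzw⟩).2
    omega

lemma setOf_dist_eq_two [DecidableEq V] (hD : Γ.D = 3) (hx : x ∈ Γ.Y) :
    {y | Γ.G.dist x y = 2} = ↑(Γ.Y.erase x) := by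
  ext y
  simp only [Set.mem_ofPred_eq, coe_erase, Set.mem_sdiff, mem_coe, Set.mem_singleton_iff]
  exact ⟨fun h => ⟨Γ.mem_Y_of_dist_eq_two hx h, Γ.ne_of_dist_eq_two h⟩,
    fun h => Γ.dist_eq_two_of_mem_Y hD hx h.1 (Ne.symm h.2)⟩

section Counting

variable [DecidableRel Γ.G.Adj]

lemma degree_eq_b_zero (hz : z ∈ Γ.Y) : Γ.G.degree z = Γ.b 0 := by
  rw [← Γ.G.ncard_neighborSet, ← Γ.hb 0 z hz z dist_self]
  congr 1
  ext w
  simp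

lemma degree_eq_b'_zero (hz : z ∈ Γ.Y') : Γ.G.degree z = Γ.b' 0 := by
  rw [← Γ.G.ncard_neighborSet, ← Γ.hb' 0 z hz z dist_self]
  congr 1
  ext w
  simp

lemma degree_eq_b'_zero_of_mem_neighborFinset (hx : x ∈ Γ.Y)
    (hu : u ∈ Γ.G.neighborFinset x) : Γ.G.degree u = Γ.b' 0 :=
  Γ.degree_eq_b'_zero ((Γ.bip x u ((Γ.G.mem_neighborFinset _ _).mp hu)).mp hx)

variable [DecidableEq V]

lemma card_inter_eq_c_two (hx : x ∈ Γ.Y) (hxz : Γ.G.dist x z = 2) :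
    #(Γ.G.neighborFinset x ∩ Γ.G.neighborFinset z) = Γ.c 2 := by
  rw [← Γ.hc 2 (by norm_num) x hx z hxz, ← Set.ncard_coe_finset]
  congr 1
  ext w
  simp [and_comm]

lemma card_inter_eq_c'_two (hu : u ∈ Γ.Y') (huv : Γ.G.dist u v = 2) :
    #(Γ.G.neighborFinset u ∩ Γ.G.neighborFinset v) = Γ.c' 2 := by
  rw [← Γ.hc' 2 (by norm_num) u hu v huv, ← Set.ncard_coe_finset]
  congr 1
  ext w
  simp [and_comm]

lemma card_inter_inter_eq_of_twoYHom (hD : Γ.D = 3) {γ : ℕ → ℕ} (hhom : Γ.TwoYHom γ)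
    (hx : x ∈ Γ.Y) (hxy : Γ.G.dist x y = 2) (hxz : Γ.G.dist x z = 2) (hyz : Γ.G.dist y z = 2) :
    #(Γ.G.neighborFinset x ∩ Γ.G.neighborFinset y ∩ Γ.G.neighborFinset z) = γ 2 := by
  rw [← hhom 2 (by norm_num) (by omega) x hx y hxy z hxz hyz, ← Set.ncard_coe_finset]
  congr 1
  ext w
  simp [and_comm, and_assoc]

lemma disjoint_neighborFinset (hx : x ∈ Γ.Y) (hz : z ∉ Γ.Y) :
    Disjoint (Γ.G.neighborFinset x) (Γ.G.neighborFinset z) := by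
  refine disjoint_left.mpr fun w hxw hzw => ?_
  have := Γ.mem_Y_iff_of_adj ((Γ.G.mem_neighborFinset _ _).mp hxw)
  have := Γ.mem_Y_iff_of_adj ((Γ.G.mem_neighborFinset _ _).mp hzw)
  tauto

lemma sum_pow_card_inter_neighborFinset (hD : Γ.D = 3) (hx : x ∈ Γ.Y) {m : ℕ} (hm : m ≠ 0) :
    ∑ z, #(Γ.G.neighborFinset x ∩ Γ.G.neighborFinset z) ^ m =
      Γ.b 0 ^ m + #(Γ.Y.erase x) * Γ.c 2 ^ m := by
  rw [← sum_subset (subset_univ Γ.Y), ← add_sum_erase _ _ hx, Finset.inter_self,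
    card_neighborFinset_eq_degree, Γ.degree_eq_b_zero hx, sum_const_nat]
  · intro z hz
    rw [Γ.card_inter_eq_c_two hx
      (Γ.dist_eq_two_of_mem_Y hD hx (mem_of_mem_erase hz) (ne_of_mem_erase hz).symm)]
  · intro z _ hz
    rw [disjoint_iff_inter_eq_empty.mp (Γ.disjoint_neighborFinset hx hz), Finset.card_empty,
      zero_pow hm]

lemma sum_pow_card_inter_inter_neighborFinset (hD : Γ.D = 3) {γ : ℕ → ℕ}
    (hhom : Γ.TwoYHom γ) (hx : x ∈ Γ.Y) (hxy : Γ.G.dist x y = 2) {m : ℕ} (hm : m ≠ 0) :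
    ∑ z, #(Γ.G.neighborFinset x ∩ Γ.G.neighborFinset y ∩ Γ.G.neighborFinset z) ^ m =
      Γ.c 2 ^ m + Γ.c 2 ^ m + #((Γ.Y.erase x).erase y) * γ 2 ^ m := by
  have hy : y ∈ Γ.Y.erase x :=
    mem_erase.mpr ⟨Γ.ne_of_dist_eq_two hxy, Γ.mem_Y_of_dist_eq_two hx hxy⟩
  rw [← sum_subset (subset_univ Γ.Y), ← add_sum_erase _ _ hx, ← add_sum_erase _ _ hy,
    sum_const_nat, ← add_assoc, Finset.inter_right_comm, Finset.inter_self, Finset.inter_assoc,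
    Finset.inter_self, Γ.card_inter_eq_c_two hx hxy]
  · intro z hz
    obtain ⟨hzy, hzx, hz⟩ : z ≠ y ∧ z ≠ x ∧ z ∈ Γ.Y := by simpa using hz
    rw [Γ.card_inter_inter_eq_of_twoYHom hD hhom hx hxy
      (Γ.dist_eq_two_of_mem_Y hD hx hz hzx.symm)
      (Γ.dist_eq_two_of_mem_Y hD (mem_of_mem_erase hy) hz hzy.symm)]
  · intro z _ hz
    rw [disjoint_iff_inter_eq_empty.mp ((Γ.disjoint_neighborFinset hx hz).mono_left
      inter_subset_left), Finset.card_empty, zero_pow hm]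

lemma card_inter_eq_c'_two_of_mem_neighborFinset (hx : x ∈ Γ.Y)
    (hu : u ∈ Γ.G.neighborFinset x) (hv : v ∈ Γ.G.neighborFinset x) (huv : u ≠ v) :
    #(Γ.G.neighborFinset u ∩ Γ.G.neighborFinset v) = Γ.c' 2 := by
  rw [mem_neighborFinset] at hu hv
  exact Γ.card_inter_eq_c'_two ((Γ.bip x u hu).mp hx)
    (Γ.dist_eq_two_of_adj_of_adj hu.symm hv huv)

lemma first_moment_neighborFinset (hD : Γ.D = 3) (hx : x ∈ Γ.Y) :
    Γ.b 0 + #(Γ.Y.erase x) * Γ.c 2 = Γ.b 0 * Γ.b' 0 := by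
  have h := Γ.sum_pow_card_inter_neighborFinset hD hx one_ne_zero
  simp only [pow_one] at h
  rw [← h, Γ.G.sum_card_inter_neighborFinset,
    sum_const_nat fun u => Γ.degree_eq_b'_zero_of_mem_neighborFinset hx,
    card_neighborFinset_eq_degree, Γ.degree_eq_b_zero hx]

lemma second_moment_neighborFinset (hD : Γ.D = 3) (hx : x ∈ Γ.Y) :
    Γ.b 0 ^ 2 + #(Γ.Y.erase x) * Γ.c 2 ^ 2 = Γ.b 0 * (Γ.b' 0 + (Γ.b 0 - 1) * Γ.c' 2) := by
  rw [← Γ.sum_pow_card_inter_neighborFinset hD hx two_ne_zero,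
    Γ.G.sum_card_inter_neighborFinset_sq,
    Γ.G.sum_sum_card_inter_neighborFinset_of_regular _
      (fun u => Γ.degree_eq_b'_zero_of_mem_neighborFinset hx)
      (fun u hu v hv => Γ.card_inter_eq_c'_two_of_mem_neighborFinset hx hu hv),
    card_neighborFinset_eq_degree, Γ.degree_eq_b_zero hx]

lemma first_moment_inter_neighborFinset (hD : Γ.D = 3) {γ : ℕ → ℕ} (hhom : Γ.TwoYHom γ)
    (hx : x ∈ Γ.Y) (hxy : Γ.G.dist x y = 2) :
    Γ.c 2 + Γ.c 2 + #((Γ.Y.erase x).erase y) * γ 2 = Γ.c 2 * Γ.b' 0 := by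
  have h := Γ.sum_pow_card_inter_inter_neighborFinset hD hhom hx hxy one_ne_zero
  simp only [pow_one] at h
  rw [← h, Γ.G.sum_card_inter_neighborFinset,
    sum_const_nat fun u hu =>
      Γ.degree_eq_b'_zero_of_mem_neighborFinset hx (mem_of_mem_inter_left hu),
    Γ.card_inter_eq_c_two hx hxy]

lemma second_moment_inter_neighborFinset (hD : Γ.D = 3) {γ : ℕ → ℕ} (hhom : Γ.TwoYHom γ)
    (hx : x ∈ Γ.Y) (hxy : Γ.G.dist x y = 2) :
    Γ.c 2 ^ 2 + Γ.c 2 ^ 2 + #((Γ.Y.erase x).erase y) * γ 2 ^ 2 =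
      Γ.c 2 * (Γ.b' 0 + (Γ.c 2 - 1) * Γ.c' 2) := by
  rw [← Γ.sum_pow_card_inter_inter_neighborFinset hD hhom hx hxy two_ne_zero,
    Γ.G.sum_card_inter_neighborFinset_sq,
    Γ.G.sum_sum_card_inter_neighborFinset_of_regular _
      (fun u hu => Γ.degree_eq_b'_zero_of_mem_neighborFinset hx (mem_of_mem_inter_left hu))
      (fun u hu v hv => Γ.card_inter_eq_c'_two_of_mem_neighborFinset hx
        (mem_of_mem_inter_left hu) (mem_of_mem_inter_left hv)),
    Γ.card_inter_eq_c_two hx hxy]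

end Counting

end DBRG

theorem stmt_19_general {V : Type} [Fintype V] (Γ : DBRG V) (hD : Γ.D = 3)
    (γ : ℕ → ℕ) (hhom : Γ.TwoYHom γ) :
    Γ.b 1 = Γ.c 2 ∧
      ∀ x ∈ Γ.Y, {y | Γ.G.dist x y = 2}.ncard = {y | Γ.G.Adj x y}.ncard := by
  classical
  obtain ⟨x, hx, u, z, w, hxu, hxz, hxw, huz, hzw⟩ := Γ.exists_dist_eq_three hD
  have hb'₀ := Γ.b'_zero_eq hx (dist_eq_one_iff_adj.mp hxu)
  have hc₂ := Γ.c_two_pos hx hxz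
  have hbc : Γ.b 1 = Γ.c 2 := by
    have h₁ := Γ.first_moment_neighborFinset hD hx
    have h₂ := Γ.second_moment_neighborFinset hD hx
    have h₃ := Γ.first_moment_inter_neighborFinset hD hhom hx hxz
    have h₄ := Γ.second_moment_inter_neighborFinset hD hhom hx hxz
    have hp := card_erase_add_one
      (mem_erase.mpr ⟨Γ.ne_of_dist_eq_two hxz, Γ.mem_Y_of_dist_eq_two hx hxz⟩)
    have hb₀ := Γ.c_two_lt_b_zero hx hxz hzw hxw
    have hb₁ := Γ.b_one_pos hx hxu huz hxz
    rw [hb'₀] at h₁ h₂ h₃ h₄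
    zify [show 1 ≤ Γ.b 0 by omega, show 1 ≤ Γ.c 2 by omega] at h₁ h₂ h₃ h₄ hp hb₀ hb₁
    exact_mod_cast eq_of_moment_identities h₁ h₂ h₃ h₄ hp hb₁ (by positivity) hb₀
  refine ⟨hbc, fun x hx => ?_⟩
  have h := Γ.first_moment_neighborFinset hD hx
  rw [hb'₀, hbc, mul_add, mul_one, add_comm] at h
  rw [Γ.setOf_dist_eq_two hD hx, Set.ncard_coe_finset]
  change _ = (Γ.G.neighborSet x).ncard
  rw [Γ.G.ncard_neighborSet, Γ.degree_eq_b_zero hx]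
  exact Nat.eq_of_mul_eq_mul_right hc₂ (by omega)

theorem stmt_19 {V : Type} [Fintype V] (Γ : DBRG V) (hk' : 3 ≤ Γ.b' 0) (hD : Γ.D = 3)
    (γ : ℕ → ℕ) (hhom : Γ.TwoYHom γ) :
    Γ.b 1 = Γ.c 2 ∧
      ∀ x ∈ Γ.Y, {y | Γ.G.dist x y = 2}.ncard = {y | Γ.G.Adj x y}.ncard :=
  stmt_19_general Γ hD γ hhom
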